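/- Let G be a connected multigraph and let (T,γ) be a rooted carving decomposition of G of width at most w. Then for every node u of T and every connected component H of the subgraph of G induced on V[u], there exists a contractive rooted carving decomposition of H of height at most w·height(u), where height(u) denotes the height of the subtree T[u]. -/

import Mathlib

/-- A multigraph: a map assigning to each edge an unordered pair of two
distinct vertices (loops forbidden, parallel edges allowed). -/
structure Multigraph (V E : Type) where
  ends : E → Sym2 V
  no_loops : ∀ e : E, ¬ (ends e).IsDiag

namespace Multigraph

variable {V E : Type}

/-- Two vertices are adjacent if some edge has them as its endpoints. -/
def Adj (G : Multigraph V E) (a b : V) : Prop :=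
  a ≠ b ∧ ∃ e : E, a ∈ G.ends e ∧ b ∈ G.ends e

/-- A multigraph is connected if every two vertices are joined by a finite
sequence of adjacencies. -/
def Connected (G : Multigraph V E) : Prop :=
  Nonempty V ∧ ∀ a b : V, Relation.ReflTransGen G.Adj a b

/-- The number of edges with one endpoint in `S` and the other outside `S`. -/
noncomputable def cutCount (G : Multigraph V E) (S : Set V) : ℕ :=
  Nat.card {e : E // (∃ a ∈ G.ends e, a ∈ S) ∧ (∃ a ∈ G.ends e, a ∉ S)}

/-- The degree of a vertex: the number of edge-endpoint incidences at `v`. -/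
noncomputable def degree (G : Multigraph V E) (v : V) : ℕ :=
  Nat.card {e : E // v ∈ G.ends e}

end Multigraph

/-- Rooted binary trees in which every internal node has exactly two children,
with leaves labeled by elements of `α`. -/
inductive BTree (α : Type) : Type
  | leaf (a : α) : BTree α
  | node (l r : BTree α) : BTree α

namespace BTree

variable {α : Type}

/-- The list of leaf labels of a binary tree. -/
def leaves : BTree α → List α
  | leaf a => [a]
  | node l r => l.leaves ++ r.leaves

/-- The set of leaf labels of a binary tree (for a node `u` of a carving
decomposition, this is `V[u]`). -/
def leafSet (T : BTree α) : Set α := {a | a ∈ T.leaves}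

/-- The height of a binary tree: maximum number of edges on a root-to-leaf path. -/
def height : BTree α → ℕ
  | leaf _ => 0
  | node l r => max l.height r.height + 1

/-- The list of all subtrees (i.e. nodes) of a binary tree. -/
def subtrees : BTree α → List (BTree α)
  | leaf a => [leaf a]
  | node l r => node l r :: (l.subtrees ++ r.subtrees)

end BTree

/-- A rooted carving decomposition of a multigraph `G` on vertex type `V`:
a rooted binary tree whose leaves are labeled bijectively with the vertices. -/
def IsCarvingDecomp {V E : Type} (_G : Multigraph V E) (T : BTree V) : Prop :=
  T.leaves.Nodup ∧ ∀ v : V, v ∈ T.leaves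

/-- The carving decomposition `T` of `G` has width at most `w`:
for every node `u`, `|E(V[u], V∖V[u])| ≤ w`. -/
def CarvWidthLE {V E : Type} (G : Multigraph V E) (T : BTree V) (w : ℕ) : Prop :=
  ∀ u ∈ T.subtrees, G.cutCount u.leafSet ≤ w

/-- A carving decomposition is contractive if for every internal node `u`
there is an edge with one endpoint in `V[u.l]` and the other in `V[u.r]`. -/
def Contractive {V E : Type} (G : Multigraph V E) (T : BTree V) : Prop :=
  ∀ l r : BTree V, BTree.node l r ∈ T.subtrees →
    ∃ e : E, (∃ a ∈ G.ends e, a ∈ l.leafSet) ∧ (∃ a ∈ G.ends e, a ∈ r.leafSet)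

/-- Adjacency within the subgraph of `G` induced on `S`. -/
def Multigraph.AdjIn {V E : Type} (G : Multigraph V E) (S : Set V) (a b : V) : Prop :=
  a ∈ S ∧ b ∈ S ∧ G.Adj a b

/-- `C` is (the vertex set of) a connected component of the subgraph of `G` induced on `S`. -/
def IsComponentOf {V E : Type} (G : Multigraph V E) (S C : Set V) : Prop :=
  ∃ v ∈ S, C = {x | x ∈ S ∧ Relation.ReflTransGen (G.AdjIn S) v x}

/-- A rooted carving decomposition of the subgraph of `G` induced on `C`:
a rooted binary tree whose leaves are labeled bijectively with the vertices of `C`. -/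
def IsCarvingDecompOn {V : Type} (C : Set V) (T : BTree V) : Prop :=
  T.leaves.Nodup ∧ ∀ v : V, v ∈ T.leaves ↔ v ∈ C

/-- The carving decomposition `T` of the subgraph of `G` induced on `C` is contractive:
for every internal node there is an edge of the induced subgraph (both endpoints in
`C`) with one endpoint in `V[u.l]` and the other in `V[u.r]`. -/
def ContractiveOn {V E : Type} (G : Multigraph V E) (C : Set V) (T : BTree V) : Prop :=
  ∀ l r : BTree V, BTree.node l r ∈ T.subtrees →
    ∃ e : E, (∀ a ∈ G.ends e, a ∈ C) ∧
      (∃ a ∈ G.ends e, a ∈ l.leafSet) ∧ (∃ a ∈ G.ends e, a ∈ r.leafSet)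

/-!
Induction on `u`. A component `C` of `V[node l r]` is partitioned into components of `V[l]`
and of `V[r]`, which by induction have contractive decompositions of height at most
`w · max (height l) (height r)`. Starting from the tree of one block, repeatedly join the
current tree with the tree of a block adjacent to it inside `C`. Each join makes a new edge
between two different blocks internal, and every such edge crosses the cut
`E(V[l], V ∖ V[l])` of at most `w` edges; so there are at most `w` joins, each adding one
to the height.
-/

open Relation

namespace BTree

variable {α : Type}

theorem leafSet_node (l r : BTree α) : (node l r).leafSet = l.leafSet ∪ r.leafSet := by
  ext x; simp [leafSet, leaves]

theorem leafSet_nonempty : ∀ T : BTree α, T.leafSet.Nonempty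
  | leaf a => ⟨a, by simp [leafSet, leaves]⟩
  | node l _ => l.leafSet_nonempty.mono (by simp [leafSet_node])

theorem mem_subtrees_self (T : BTree α) : T ∈ T.subtrees := by
  cases T <;> simp [subtrees]

theorem mem_subtrees_trans {T u s : BTree α} (hu : u ∈ T.subtrees) (hs : s ∈ u.subtrees) :
    s ∈ T.subtrees := by
  induction T with
  | leaf a =>
    obtain rfl : u = leaf a := by simpa [subtrees] using hu
    exact hs
  | node l r ihl ihr =>
    simp only [subtrees, List.mem_cons, List.mem_append] at hu ⊢
    rcases hu with rfl | hu | hu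
    · simpa [subtrees] using hs
    · exact .inr (.inl (ihl hu))
    · exact .inr (.inr (ihr hu))

theorem leaves_sublist_of_mem_subtrees {T u : BTree α} (hu : u ∈ T.subtrees) :
    u.leaves.Sublist T.leaves := by
  induction T with
  | leaf a =>
    obtain rfl : u = leaf a := by simpa [subtrees] using hu
    exact .refl _
  | node l r ihl ihr =>
    simp only [subtrees, List.mem_cons, List.mem_append] at hu
    rcases hu with rfl | hu | hu
    · exact .refl _
    · exact (ihl hu).trans (List.sublist_append_left _ _)
    · exact (ihr hu).trans (List.sublist_append_right _ _)

theorem nodup_node_iff {l r : BTree α} :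
    (node l r).leaves.Nodup ↔ l.leaves.Nodup ∧ r.leaves.Nodup ∧ Disjoint l.leafSet r.leafSet := by
  simp only [leaves, List.nodup_append, Set.disjoint_left, leafSet, Set.mem_ofPred_eq]
  exact and_congr_right fun _ => and_congr_right fun _ =>
    ⟨fun h x hl hr => h x hl x hr rfl, fun h x hl y hr hxy => h hl (hxy ▸ hr)⟩

end BTree

namespace Multigraph

variable {V E : Type} (G : Multigraph V E)

theorem Adj.symm {G : Multigraph V E} {a b : V} (h : G.Adj a b) : G.Adj b a :=
  ⟨h.1.symm, h.2.imp fun _ he => ⟨he.2, he.1⟩⟩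

theorem Adj.exists_ends_eq {G : Multigraph V E} {a b : V} (h : G.Adj a b) :
    ∃ e, G.ends e = s(a, b) :=
  h.2.imp fun _ he => (Sym2.mem_and_mem_iff h.1).1 he

instance (S : Set V) : Std.Symm (G.AdjIn S) :=
  ⟨fun _ _ h => ⟨h.2.1, h.1, h.2.2.symm⟩⟩

theorem cutCount_eq_ncard (S : Set V) :
    G.cutCount S = {e | (∃ a ∈ G.ends e, a ∈ S) ∧ ∃ a ∈ G.ends e, a ∉ S}.ncard := by
  rw [cutCount, ← Nat.card_coe_set_eq]
  rfl

def edgesIn (D : Set V) : Set E := {e | ∀ a ∈ G.ends e, a ∈ D}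

theorem edgesIn_mono {D D' : Set V} (h : D ⊆ D') : G.edgesIn D ⊆ G.edgesIn D' :=
  fun _ he a ha => h (he a ha)

section Component

variable {S S' : Set V} {v x : V}

def component (S : Set V) (v : V) : Set V := {x | x ∈ S ∧ ReflTransGen (G.AdjIn S) v x}

theorem isComponentOf_iff {C : Set V} : IsComponentOf G S C ↔ ∃ v ∈ S, C = G.component S v :=
  Iff.rfl

theorem mem_component_self (hv : v ∈ S) : v ∈ G.component S v := ⟨hv, .refl⟩

theorem component_subset : G.component S v ⊆ S := fun _ h => h.1

theorem component_eq_of_mem (hx : x ∈ G.component S v) : G.component S x = G.component S v := by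
  ext y
  exact and_congr_right fun _ => ⟨hx.2.trans, (symm hx.2).trans⟩

theorem component_mono (h : S ⊆ S') : G.component S v ⊆ G.component S' v := by
  rintro x ⟨hx, hvx⟩
  exact ⟨h hx, ReflTransGen.mono (fun a b hab => ⟨h hab.1, h hab.2.1, hab.2.2⟩) _ _ hvx⟩

theorem mem_component_of_adj (hx : x ∈ G.component S v) {y : V} (hy : y ∈ S)
    (hxy : G.Adj x y) : y ∈ G.component S v :=
  ⟨hy, hx.2.tail ⟨hx.1, hy, hxy⟩⟩

theorem component_leaf {a : V} (hv : v ∈ (BTree.leaf a).leafSet) :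
    G.component (BTree.leaf a).leafSet v = {a} := by
  obtain rfl : v = a := by simpa [BTree.leafSet, BTree.leaves] using hv
  refine Set.eq_singleton_iff_unique_mem.2 ⟨G.mem_component_self hv, fun x hx => ?_⟩
  simpa [BTree.leafSet, BTree.leaves] using G.component_subset hx

end Component

def PreconnectedOn (C : Set V) : Prop := ∀ x ∈ C, ∀ y ∈ C, ReflTransGen (G.AdjIn C) x y

theorem preconnectedOn_component (S : Set V) (v : V) : G.PreconnectedOn (G.component S v) := by
  have from_root : ∀ x ∈ G.component S v, ReflTransGen (G.AdjIn (G.component S v)) v x := by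
    rintro x ⟨-, hvx⟩
    induction hvx with
    | refl => exact .refl
    | @tail a b hva hab ih => exact ih.tail ⟨⟨hab.1, hva⟩, ⟨hab.2.1, hva.tail hab⟩, hab.2.2⟩
  exact fun x hx y hy => (symm (from_root x hx)).trans (from_root y hy)

theorem PreconnectedOn.exists_adj_of_ssubset {G : Multigraph V E} {C D : Set V}
    (hC : G.PreconnectedOn C) (hDC : D ⊂ C) (hD : D.Nonempty) :
    ∃ a ∈ D, ∃ b ∈ C, b ∉ D ∧ G.Adj a b := by
  obtain ⟨y, hyC, hyD⟩ := Set.exists_of_ssubset hDC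
  obtain ⟨x, hxD⟩ := hD
  suffices ∀ z, ReflTransGen (G.AdjIn C) x z → z ∉ D → ∃ a ∈ D, ∃ b ∈ C, b ∉ D ∧ G.Adj a b from
    this y (hC x (hDC.1 hxD) y hyC) hyD
  intro z hxz
  induction hxz with
  | refl => exact fun h => absurd hxD h
  | @tail c d _ hcd ih =>
    intro hd
    by_cases hc : c ∈ D
    · exact ⟨c, hc, d, hcd.2.1, hd, hcd.2.2⟩
    · exact ih hc

end Multigraph

section CarvingDecomp

variable {V E : Type} {G : Multigraph V E} {C C' : Set V} {T TA TB : BTree V}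

theorem IsCarvingDecompOn.leafSet_eq (h : IsCarvingDecompOn C T) : T.leafSet = C := Set.ext h.2

theorem isCarvingDecompOn_leafSet_iff : IsCarvingDecompOn T.leafSet T ↔ T.leaves.Nodup :=
  ⟨And.left, fun h => ⟨h, fun _ => Iff.rfl⟩⟩

theorem isCarvingDecompOn_leaf (a : V) : IsCarvingDecompOn {a} (.leaf a) := by
  simp [IsCarvingDecompOn, BTree.leaves]

theorem contractiveOn_leaf (G : Multigraph V E) (C : Set V) (a : V) :
    ContractiveOn G C (.leaf a) := by
  intro l r h
  simp [BTree.subtrees] at h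

theorem ContractiveOn.mono (hCC' : C ⊆ C') (hT : ContractiveOn G C T) : ContractiveOn G C' T :=
  fun l r h => (hT l r h).imp fun _ he => ⟨fun a ha => hCC' (he.1 a ha), he.2⟩

theorem ContractiveOn.node (hA : ContractiveOn G C TA) (hB : ContractiveOn G C TB) {e : E}
    (he : e ∈ G.edgesIn C) {a b : V} (ha : a ∈ G.ends e) (haA : a ∈ TA.leafSet)
    (hb : b ∈ G.ends e) (hbB : b ∈ TB.leafSet) : ContractiveOn G C (.node TA TB) := by
  intro l r h
  simp only [BTree.subtrees, List.mem_cons, List.mem_append] at h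
  rcases h with h | h | h
  · obtain ⟨rfl, rfl⟩ := BTree.node.inj h
    exact ⟨e, he, ⟨a, ha, haA⟩, b, hb, hbB⟩
  · exact hA l r h
  · exact hB l r h

end CarvingDecomp

/-- `P` assigns to each vertex of `C` its block in a partition of `C`. -/
structure IsBlockFamily {V : Type} (C : Set V) (P : V → Set V) : Prop where
  mem_self : ∀ x ∈ C, x ∈ P x
  subset : ∀ x ∈ C, P x ⊆ C
  eq_of_mem : ∀ x ∈ C, ∀ y ∈ P x, P y = P x

namespace Multigraph

section BlockMerge

variable {V E : Type} (G : Multigraph V E)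

def interBlockEdges (C : Set V) (P : V → Set V) : Set E :=
  {e ∈ G.edgesIn C | ∃ a ∈ G.ends e, ∃ b ∈ G.ends e, b ∉ P a}

structure IsBlockMerge (C : Set V) (P : V → Set V) (T : BTree V) : Prop where
  nodup : T.leaves.Nodup
  subset : T.leafSet ⊆ C
  closed : ∀ x ∈ T.leafSet, P x ⊆ T.leafSet
  contractive : ContractiveOn G C T

variable {G} {C : Set V} {P : V → Set V} {H : ℕ}

theorem IsBlockMerge.exists_step (hC : G.PreconnectedOn C) (hP : IsBlockFamily C P)
    (hdec : ∀ x ∈ C, ∃ T, IsCarvingDecompOn (P x) T ∧ ContractiveOn G (P x) T ∧ T.height ≤ H)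
    {T : BTree V} (hT : G.IsBlockMerge C P T) (hne : T.leafSet ≠ C) :
    ∃ T', G.IsBlockMerge C P T' ∧ T'.height ≤ max T.height H + 1 ∧
      G.interBlockEdges C P \ G.edgesIn T'.leafSet ⊂
        G.interBlockEdges C P \ G.edgesIn T.leafSet := by
  obtain ⟨a, haT, b, hbC, hbT, hab⟩ :=
    hC.exists_adj_of_ssubset (hT.subset.ssubset_of_ne hne) T.leafSet_nonempty
  obtain ⟨e, he⟩ := hab.exists_ends_eq
  obtain ⟨Tb, hTb, hTbc, hTbh⟩ := hdec b hbC
  have hbPa : b ∉ P a := fun h => hbT (hT.closed a haT h)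
  have hdisj : Disjoint T.leafSet (P b) := Set.disjoint_left.2 fun z hzT hzb =>
    hbT (hT.closed z hzT (hP.eq_of_mem b hbC z hzb ▸ hP.mem_self b hbC))
  have heC : e ∈ G.edgesIn C := by
    intro c hc
    rw [he, Sym2.mem_iff] at hc
    rcases hc with rfl | rfl
    exacts [hT.subset haT, hbC]
  have hleaf : (BTree.node T Tb).leafSet = T.leafSet ∪ P b := by
    rw [BTree.leafSet_node, hTb.leafSet_eq]
  refine ⟨.node T Tb, ⟨?_, ?_, ?_, ?_⟩, ?_, ?_⟩
  · exact BTree.nodup_node_iff.2 ⟨hT.nodup, hTb.1, hTb.leafSet_eq ▸ hdisj⟩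
  · rw [hleaf]
    exact Set.union_subset hT.subset (hP.subset b hbC)
  · rw [hleaf]
    rintro x (hx | hx)
    · exact (hT.closed x hx).trans Set.subset_union_left
    · rw [hP.eq_of_mem b hbC x hx]
      exact Set.subset_union_right
  · exact hT.contractive.node (hTbc.mono (hP.subset b hbC)) heC (by simp [he]) haT
      (by simp [he]) (hTb.leafSet_eq ▸ hP.mem_self b hbC)
  · simp only [BTree.height]
    omega
  · refine (Set.ssubset_iff_of_subset (Set.sdiff_subset_sdiff_right
      (G.edgesIn_mono (hleaf ▸ Set.subset_union_left)))).2 ⟨e, ?_, fun h => h.2 ?_⟩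
    · exact ⟨⟨heC, a, by simp [he], b, by simp [he], hbPa⟩, fun h => hbT (h b (by simp [he]))⟩
    · intro c hc
      rw [he, Sym2.mem_iff] at hc
      rw [hleaf]
      rcases hc with rfl | rfl
      exacts [.inl haT, .inr (hP.mem_self c hbC)]

variable [Finite E]

theorem IsBlockMerge.exists_completion (hC : G.PreconnectedOn C) (hP : IsBlockFamily C P)
    (hdec : ∀ x ∈ C, ∃ T, IsCarvingDecompOn (P x) T ∧ ContractiveOn G (P x) T ∧ T.height ≤ H)
    {T : BTree V} (hT : G.IsBlockMerge C P T) :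
    ∃ T', IsCarvingDecompOn C T' ∧ ContractiveOn G C T' ∧
      T'.height ≤ max T.height H + (G.interBlockEdges C P \ G.edgesIn T.leafSet).ncard := by
  induction hn : (G.interBlockEdges C P \ G.edgesIn T.leafSet).ncard
    using Nat.strong_induction_on generalizing T with
  | _ n ih =>
  by_cases hTC : T.leafSet = C
  · exact ⟨T, hTC ▸ isCarvingDecompOn_leafSet_iff.2 hT.nodup, hT.contractive, by omega⟩
  obtain ⟨T', hT', hh, hlt⟩ := hT.exists_step hC hP hdec hTC
  have hlt' := hn ▸ Set.ncard_lt_ncard hlt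
  obtain ⟨T'', h1, h2, h3⟩ := ih _ hlt' hT' rfl
  exact ⟨T'', h1, h2, by omega⟩

theorem exists_contractiveOn_of_isBlockFamily (hC : G.PreconnectedOn C) (hP : IsBlockFamily C P)
    (hdec : ∀ x ∈ C, ∃ T, IsCarvingDecompOn (P x) T ∧ ContractiveOn G (P x) T ∧ T.height ≤ H)
    {v : V} (hv : v ∈ C) :
    ∃ T, IsCarvingDecompOn C T ∧ ContractiveOn G C T ∧
      T.height ≤ H + (G.interBlockEdges C P).ncard := by
  obtain ⟨T₀, hT₀, hT₀c, hT₀h⟩ := hdec v hv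
  have hT₀m : G.IsBlockMerge C P T₀ := by
    refine ⟨hT₀.1, ?_, ?_, hT₀c.mono (hP.subset v hv)⟩ <;> rw [hT₀.leafSet_eq]
    · exact hP.subset v hv
    · intro x hx
      rw [hP.eq_of_mem v hv x hx]
  obtain ⟨T, h1, h2, h3⟩ := hT₀m.exists_completion hC hP hdec
  have := Set.ncard_le_ncard (Set.sdiff_subset (s := G.interBlockEdges C P)
    (t := G.edgesIn T₀.leafSet))
  exact ⟨T, h1, h2, by omega⟩

end BlockMerge

section SideComponent

variable {V E : Type} (G : Multigraph V E) {A B : Set V} {x : V}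

open scoped Classical in
def sideComponent (A B : Set V) (x : V) : Set V :=
  if x ∈ A then G.component A x else G.component B x

variable {G}

theorem sideComponent_of_mem (h : x ∈ A) : G.sideComponent A B x = G.component A x := if_pos h

theorem sideComponent_of_notMem (h : x ∉ A) : G.sideComponent A B x = G.component B x :=
  if_neg h

theorem mem_sideComponent_self (hx : x ∈ A ∪ B) : x ∈ G.sideComponent A B x := by
  by_cases hA : x ∈ A
  · rw [sideComponent_of_mem hA]
    exact G.mem_component_self hA
  · rw [sideComponent_of_notMem hA]
    exact G.mem_component_self (hx.resolve_left hA)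

theorem isBlockFamily_sideComponent (hAB : Disjoint A B) (v : V) :
    IsBlockFamily (G.component (A ∪ B) v) (G.sideComponent A B) where
  mem_self _ hx := mem_sideComponent_self hx.1
  subset y hy := by
    rw [← G.component_eq_of_mem hy]
    by_cases hA : y ∈ A
    · rw [sideComponent_of_mem hA]
      exact G.component_mono Set.subset_union_left
    · rw [sideComponent_of_notMem hA]
      exact G.component_mono Set.subset_union_right
  eq_of_mem y _ z hz := by
    by_cases hA : y ∈ A
    · rw [sideComponent_of_mem hA] at hz ⊢
      rw [sideComponent_of_mem (G.component_subset hz), G.component_eq_of_mem hz]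
    · rw [sideComponent_of_notMem hA] at hz ⊢
      rw [sideComponent_of_notMem (Set.disjoint_right.1 hAB (G.component_subset hz)),
        G.component_eq_of_mem hz]

/-- Adjacent vertices on the same side lie in the same block. -/
theorem interBlockEdges_sideComponent_subset {C : Set V} (hC : C ⊆ A ∪ B) :
    G.interBlockEdges C (G.sideComponent A B) ⊆
      {e | (∃ a ∈ G.ends e, a ∈ A) ∧ ∃ a ∈ G.ends e, a ∉ A} := by
  rintro e ⟨heC, a, ha, b, hb, hba⟩
  have haAB := hC (heC a ha)
  have hbAB := hC (heC b hb)
  have hab : G.Adj a b :=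
    ⟨fun h => hba (h ▸ mem_sideComponent_self haAB), e, ha, hb⟩
  by_cases haA : a ∈ A
  · refine ⟨⟨a, ha, haA⟩, b, hb, fun hbA => hba ?_⟩
    rw [sideComponent_of_mem haA]
    exact G.mem_component_of_adj (G.mem_component_self haA) hbA hab
  by_cases hbA : b ∈ A
  · exact ⟨⟨b, hb, hbA⟩, a, ha, haA⟩
  refine absurd ?_ hba
  rw [sideComponent_of_notMem haA]
  exact G.mem_component_of_adj (G.mem_component_self (haAB.resolve_left haA))
    (hbAB.resolve_left hbA) hab

end SideComponent

variable {V E : Type} {G : Multigraph V E}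

theorem exists_contractiveOn_of_isComponentOf [Finite E] (w : ℕ) (u : BTree V)
    (hu : u.leaves.Nodup) (hw : ∀ s ∈ u.subtrees, G.cutCount s.leafSet ≤ w) {C : Set V}
    (hC : IsComponentOf G u.leafSet C) :
    ∃ T, IsCarvingDecompOn C T ∧ ContractiveOn G C T ∧ T.height ≤ w * u.height := by
  induction u generalizing C with
  | leaf a =>
    obtain ⟨v, hv, rfl⟩ := G.isComponentOf_iff.1 hC
    rw [G.component_leaf hv]
    exact ⟨.leaf a, isCarvingDecompOn_leaf a, contractiveOn_leaf G _ a, by simp [BTree.height]⟩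
  | node l r ihl ihr =>
    obtain ⟨v, hv, rfl⟩ := G.isComponentOf_iff.1 hC
    obtain ⟨hl, hr, hlr⟩ := BTree.nodup_node_iff.1 hu
    have hwl s (hs : s ∈ l.subtrees) := hw s (by simp [BTree.subtrees, hs])
    have hwr s (hs : s ∈ r.subtrees) := hw s (by simp [BTree.subtrees, hs])
    rw [BTree.leafSet_node] at hv ⊢
    have hdec : ∀ x ∈ G.component (l.leafSet ∪ r.leafSet) v,
        ∃ T, IsCarvingDecompOn (G.sideComponent l.leafSet r.leafSet x) T ∧
          ContractiveOn G (G.sideComponent l.leafSet r.leafSet x) T ∧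
          T.height ≤ w * max l.height r.height := by
      intro x hx
      by_cases hxl : x ∈ l.leafSet
      · obtain ⟨T, h1, h2, h3⟩ := ihl hl hwl ⟨x, hxl, rfl⟩
        rw [sideComponent_of_mem hxl]
        exact ⟨T, h1, h2, h3.trans (Nat.mul_le_mul_left w (le_max_left _ _))⟩
      · obtain ⟨T, h1, h2, h3⟩ := ihr hr hwr ⟨x, hx.1.resolve_left hxl, rfl⟩
        rw [sideComponent_of_notMem hxl]
        exact ⟨T, h1, h2, h3.trans (Nat.mul_le_mul_left w (le_max_right _ _))⟩
    obtain ⟨T, h1, h2, h3⟩ := exists_contractiveOn_of_isBlockFamily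
      (G.preconnectedOn_component _ v) (isBlockFamily_sideComponent hlr v) hdec
      (G.mem_component_self hv)
    have hcut : (G.interBlockEdges (G.component (l.leafSet ∪ r.leafSet) v)
        (G.sideComponent l.leafSet r.leafSet)).ncard ≤ w :=
      (Set.ncard_le_ncard (interBlockEdges_sideComponent_subset G.component_subset)).trans
        ((G.cutCount_eq_ncard _).symm.trans_le (hwl l l.mem_subtrees_self))
    refine ⟨T, h1, h2, h3.trans ?_⟩
    simp only [BTree.height, Nat.mul_succ]
    omega

end Multigraph

theorem statement_14_general {V E : Type} [Fintype E]
    (G : Multigraph V E)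
    (T : BTree V) (hT : IsCarvingDecomp G T)
    (w : ℕ) (hw : CarvWidthLE G T w)
    (u : BTree V) (hu : u ∈ T.subtrees)
    (C : Set V) (hC : IsComponentOf G u.leafSet C) :
    ∃ T' : BTree V, IsCarvingDecompOn C T' ∧ ContractiveOn G C T' ∧
      T'.height ≤ w * u.height :=
  G.exists_contractiveOn_of_isComponentOf w u
    (hT.1.sublist (BTree.leaves_sublist_of_mem_subtrees hu))
    (fun s hs => hw s (BTree.mem_subtrees_trans hu hs)) hC

/-- Let `G` be a connected multigraph and `(T,γ)` a rooted carving
decomposition of `G` of width at most `w`. Then for every node `u` of `T` and every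
connected component `H` of the subgraph of `G` induced on `V[u]`, there is a contractive
rooted carving decomposition of `H` of height at most `w · height(u)`. -/
theorem statement_14 {V E : Type} [Fintype V] [Fintype E]
    (G : Multigraph V E) (hG : G.Connected)
    (T : BTree V) (hT : IsCarvingDecomp G T)
    (w : ℕ) (hw : CarvWidthLE G T w)
    (u : BTree V) (hu : u ∈ T.subtrees)
    (C : Set V) (hC : IsComponentOf G u.leafSet C) :
    ∃ T' : BTree V, IsCarvingDecompOn C T' ∧ ContractiveOn G C T' ∧
      T'.height ≤ w * u.height :=
  statement_14_general G T hT w hw u hu C hC
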